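/- arXiv:1004.1438 — 3 statements merged into one kernel-verified Lean document; each statement's English description precedes it below -/
import Mathlib

section
/- For a 2-form Ω on a manifold N, the Dirac structure D_Ω (the graph of Ω) is integrable (closed under the Courant bracket) if and only if Ω is closed, i.e., dΩ = 0. -/
noncomputable section

variable {E : Type*} [NormedAddCommGroup E] [NormedSpace ℝ E]

/-- Lie derivative of a 1-form `α` along a vector field `X` in the flat (global chart)
model: `(L_X α)(x) = Dα_x(X x) + α(x) ∘ DX_x`. -/
def lieDeriv1 (X : E → E) (α : E → E →L[ℝ] ℝ) (x : E) : E →L[ℝ] ℝ :=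
  fderiv ℝ α x (X x) + (α x).comp (fderiv ℝ X x)

lemma lieDeriv1_eq (Ω : E → E →L[ℝ] E →L[ℝ] ℝ) (hΩs : ContDiff ℝ (⊤ : ℕ∞) Ω)
    (X₁ X₂ : E → E) (h2 : ContDiff ℝ (⊤ : ℕ∞) X₂) (x w : E) :
    lieDeriv1 X₁ (fun y => Ω y (X₂ y)) x w
      = fderiv ℝ Ω x (X₁ x) (X₂ x) w + Ω x (fderiv ℝ X₂ x (X₁ x)) w
        + Ω x (X₂ x) (fderiv ℝ X₁ x w) := by
  have hΩd : DifferentiableAt ℝ Ω x := hΩs.differentiable (by simp) x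
  have h2d : DifferentiableAt ℝ X₂ x := h2.differentiable (by simp) x
  simp only [lieDeriv1, fderiv_clm_apply hΩd h2d]
  simp [ContinuousLinearMap.add_apply, ContinuousLinearMap.flip_apply]
  ring

/-- the graph Dirac structure `D_Ω` of a smooth 2-form `Ω` (whose sections are
exactly the pairs `(X, i_X Ω)`) is integrable, i.e. satisfies
`⟨L_{X₁}α₂, X₃⟩ + ⟨L_{X₂}α₃, X₁⟩ + ⟨L_{X₃}α₁, X₂⟩ = 0` for all sections, if and only if
`dΩ = 0`. -/
theorem stmt1 (Ω : E → E →L[ℝ] E →L[ℝ] ℝ) (hΩs : ContDiff ℝ (⊤ : ℕ∞) Ω)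
    (hΩa : ∀ x u v, Ω x u v = - Ω x v u) :
    (∀ X₁ X₂ X₃ : E → E, ContDiff ℝ (⊤ : ℕ∞) X₁ → ContDiff ℝ (⊤ : ℕ∞) X₂ → ContDiff ℝ (⊤ : ℕ∞) X₃ →
      ∀ x : E,
        lieDeriv1 X₁ (fun y => Ω y (X₂ y)) x (X₃ x)
        + lieDeriv1 X₂ (fun y => Ω y (X₃ y)) x (X₁ x)
        + lieDeriv1 X₃ (fun y => Ω y (X₁ y)) x (X₂ x) = 0)
    ↔ (∀ x u v w : E,
        fderiv ℝ Ω x u v w + fderiv ℝ Ω x v w u + fderiv ℝ Ω x w u v = 0) := by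
  constructor
  · intro h x u v w
    have := h (fun _ => u) (fun _ => v) (fun _ => w) contDiff_const contDiff_const
      contDiff_const x
    rw [lieDeriv1_eq Ω hΩs _ _ contDiff_const,
        lieDeriv1_eq Ω hΩs _ _ contDiff_const,
        lieDeriv1_eq Ω hΩs _ _ contDiff_const] at this
    simpa using this
  · intro h X₁ X₂ X₃ h1 h2 h3 x
    rw [lieDeriv1_eq Ω hΩs _ _ h2, lieDeriv1_eq Ω hΩs _ _ h3, lieDeriv1_eq Ω hΩs _ _ h1]
    linarith [h x (X₁ x) (X₂ x) (X₃ x),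
      hΩa x (fderiv ℝ X₂ x (X₁ x)) (X₃ x),
      hΩa x (fderiv ℝ X₃ x (X₂ x)) (X₁ x),
      hΩa x (fderiv ℝ X₁ x (X₃ x)) (X₂ x)]
end
end

section
/- Let G act freely and properly on a manifold P with principal connection A on the bundle ρ: P → P/G. The map α: TP/G → T(P/G) ⊕ ad P, [x, v_x] ↦ (Tρ(v_x), [x, A_x(v_x)]) is a well-defined vector bundle isomorphism over P/G, where ad P = (P × 𝔤)/G is the adjoint bundle. -/
/-- The relation defining the adjoint bundle fiber over `z`. -/
abbrev rArel {P Z G : Type*} [Group G] [MulAction G P]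
    {𝔤 : Type*} [AddCommGroup 𝔤] [Module ℝ 𝔤]
    (ρ : P → Z) (hρ : ∀ x y : P, ρ x = ρ y ↔ ∃ g : G, g • x = y)
    (Ad : G → 𝔤 ≃ₗ[ℝ] 𝔤) (z : Z) :
    ({x : P // ρ x = z} × 𝔤) → ({x : P // ρ x = z} × 𝔤) → Prop :=
  fun a b => ∃ g : G, b = (⟨g • a.1.1,
      ((hρ (g • a.1.1) a.1.1).2 ⟨g⁻¹, inv_smul_smul g a.1.1⟩).trans a.1.2⟩,
      Ad g a.2)

/-- Atiyah isomorphism: for a free (and proper) action of `G` on `P` with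
orbit map `ρ : P → P/G = Z` and a principal connection `A`, the map
`α : TP/G → T(P/G) ⊕ ad P`, `[x, v] ↦ (Tρ(v), [x, A_x(v)])`, is well defined and a
bijection fibered over `P/G` (where `ad P = P ×_G 𝔤` is the adjoint bundle).  Tangent
spaces are modelled by a family `TP x` with equivariant linear identifications `dΦ g x`,
and `Tρ x : TP x → TZ (ρ x)` is surjective with kernel the vertical space (the range of
the infinitesimal-generator map `gen x`). -/
theorem stmt11
    (P Z : Type*) (G : Type*) [Group G] [MulAction G P]
    (𝔤 : Type*) [AddCommGroup 𝔤] [Module ℝ 𝔤]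
    (TP : P → Type*) [∀ x, AddCommGroup (TP x)] [∀ x, Module ℝ (TP x)]
    (TZ : Z → Type*) [∀ z, AddCommGroup (TZ z)] [∀ z, Module ℝ (TZ z)]
    (hfree : ∀ (g : G) (x : P), g • x = x → g = 1)
    (ρ : P → Z) (hρsurj : Function.Surjective ρ)
    (hρ : ∀ x y : P, ρ x = ρ y ↔ ∃ g : G, g • x = y)
    (dΦ : ∀ (g : G) (x : P), TP x ≃ₗ[ℝ] TP (g • x))
    (hdΦ : ∀ (g h : G) (x : P) (v : TP x),
      (⟨(g * h) • x, dΦ (g * h) x v⟩ : Σ x : P, TP x)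
        = ⟨g • (h • x), dΦ g (h • x) (dΦ h x v)⟩)
    (Ad : G → 𝔤 ≃ₗ[ℝ] 𝔤)
    (gen : ∀ x : P, 𝔤 →ₗ[ℝ] TP x)
    (hgen : ∀ (g : G) (x : P) (ξ : 𝔤), gen (g • x) (Ad g ξ) = dΦ g x (gen x ξ))
    (Tρ : ∀ x : P, TP x →ₗ[ℝ] TZ (ρ x))
    (hTρsurj : ∀ x, Function.Surjective (Tρ x))
    (hker : ∀ x, LinearMap.ker (Tρ x) = LinearMap.range (gen x))
    (hTρequi : ∀ (g : G) (x : P) (v : TP x),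
      (⟨ρ (g • x), Tρ (g • x) (dΦ g x v)⟩ : Σ z : Z, TZ z) = ⟨ρ x, Tρ x v⟩)
    (A : ∀ x : P, TP x →ₗ[ℝ] 𝔤)
    (hA : ∀ (x : P) (ξ : 𝔤), A x (gen x ξ) = ξ)
    (hAequi : ∀ (g : G) (x : P) (v : TP x), A (g • x) (dΦ g x v) = Ad g (A x v)) :
    ∃ α : Quot (fun a b : Σ x : P, TP x => ∃ g : G, b = ⟨g • a.1, dΦ g a.1 a.2⟩)
        → Σ z : Z, TZ z × Quot (fun a b : {x : P // ρ x = z} × 𝔤 =>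
            ∃ g : G, b = (⟨g • a.1.1,
              ((hρ (g • a.1.1) a.1.1).2 ⟨g⁻¹, inv_smul_smul g a.1.1⟩).trans a.1.2⟩,
              Ad g a.2)),
      (∀ (x : P) (v : TP x),
        α (Quot.mk _ ⟨x, v⟩) = ⟨ρ x, Tρ x v, Quot.mk _ (⟨x, rfl⟩, A x v)⟩)
      ∧ Function.Bijective α := by
  classical
  -- dΦ 1 is the identity (at the level of the total space Σ x, TP x)
  have hΦone : ∀ (x : P) (v : TP x), (⟨(1 : G) • x, dΦ 1 x v⟩ : Σ x : P, TP x) = ⟨x, v⟩ := by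
    have hinj : ∀ (x y : P) (v : TP x) (w : TP y),
        (⟨(1 : G) • x, dΦ 1 x v⟩ : Σ x : P, TP x) = ⟨(1 : G) • y, dΦ 1 y w⟩ →
        (⟨x, v⟩ : Σ x : P, TP x) = ⟨y, w⟩ := by
      intro x y v w h
      obtain ⟨h1, h2⟩ := Sigma.mk.inj_iff.mp h
      have hxy : x = y := by simpa using h1
      subst hxy
      exact congrArg (Sigma.mk x) ((dΦ 1 x).injective (eq_of_heq h2))
    intro x v
    have h := hdΦ 1 1 x v
    rw [one_mul] at h
    exact hinj _ _ _ _ h.symm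
  -- transport of `gen` along equalities of base points
  have genCongr : ∀ {x y : P} (_ : x = y) (ξ : 𝔤),
      (⟨x, gen x ξ⟩ : Σ x : P, TP x) = ⟨y, gen y ξ⟩ := by
    rintro x y rfl ξ; rfl
  have sigmaGenInj : ∀ (x : P) (ξ η : 𝔤),
      (⟨x, gen x ξ⟩ : Σ x : P, TP x) = ⟨x, gen x η⟩ → ξ = η := by
    intro x ξ η h
    have h2 : gen x ξ = gen x η := eq_of_heq (Sigma.mk.inj_iff.mp h).2
    calc ξ = A x (gen x ξ) := (hA x ξ).symm
      _ = A x (gen x η) := by rw [h2]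
      _ = η := hA x η
  have hAd1 : ∀ (x : P) (ξ : 𝔤), Ad 1 ξ = ξ := by
    intro x ξ
    apply sigmaGenInj x
    calc (⟨x, gen x (Ad 1 ξ)⟩ : Σ x : P, TP x)
        = ⟨(1 : G) • x, gen ((1 : G) • x) (Ad 1 ξ)⟩ := genCongr (one_smul G x).symm _
      _ = ⟨(1 : G) • x, dΦ 1 x (gen x ξ)⟩ := congrArg (Sigma.mk _) (hgen 1 x ξ)
      _ = ⟨x, gen x ξ⟩ := hΦone x (gen x ξ)
  have hAdmul : ∀ (x : P) (g h : G) (ξ : 𝔤), Ad (g * h) ξ = Ad g (Ad h ξ) := by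
    intro x g h ξ
    apply sigmaGenInj (g • (h • x))
    calc (⟨g • (h • x), gen (g • (h • x)) (Ad (g * h) ξ)⟩ : Σ x : P, TP x)
        = ⟨(g * h) • x, gen ((g * h) • x) (Ad (g * h) ξ)⟩ := genCongr (mul_smul g h x).symm _
      _ = ⟨(g * h) • x, dΦ (g * h) x (gen x ξ)⟩ := congrArg (Sigma.mk _) (hgen (g * h) x ξ)
      _ = ⟨g • (h • x), dΦ g (h • x) (dΦ h x (gen x ξ))⟩ := hdΦ g h x (gen x ξ)
      _ = ⟨g • (h • x), dΦ g (h • x) (gen (h • x) (Ad h ξ))⟩ :=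
          congrArg (fun u => (⟨g • (h • x), dΦ g (h • x) u⟩ : Σ x : P, TP x)) (hgen h x ξ).symm
      _ = ⟨g • (h • x), gen (g • (h • x)) (Ad g (Ad h ξ))⟩ := (hgen g (h • x) (Ad h ξ)).symm ▸ rfl
  have hAdinv : ∀ (x : P) (g : G) (ξ : 𝔤), Ad g⁻¹ (Ad g ξ) = ξ := by
    intro x g ξ
    rw [← hAdmul x g⁻¹ g ξ, inv_mul_cancel, hAd1 x]
  -- the adjoint relation is an equivalence
  have rAequiv : ∀ z : Z, Equivalence (rArel ρ hρ Ad z) := by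
    intro z
    constructor
    · rintro ⟨⟨x, hx⟩, ξ⟩
      refine ⟨1, ?_⟩
      rw [Prod.mk.injEq]
      exact ⟨Subtype.ext (one_smul G x).symm, (hAd1 x ξ).symm⟩
    · rintro ⟨⟨x, hx⟩, ξ⟩ ⟨⟨y, hy⟩, η⟩ ⟨g, hg⟩
      have h1 : y = g • x := congrArg (fun p => p.1.1) hg
      have h2 : η = Ad g ξ := congrArg Prod.snd hg
      subst h1; subst h2
      refine ⟨g⁻¹, ?_⟩
      rw [Prod.mk.injEq]
      exact ⟨Subtype.ext (inv_smul_smul g x).symm, (hAdinv x g ξ).symm⟩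
    · rintro ⟨⟨x, hx⟩, ξ⟩ b c ⟨g1, rfl⟩ ⟨g2, rfl⟩
      refine ⟨g2 * g1, ?_⟩
      rw [Prod.mk.injEq]
      exact ⟨Subtype.ext (mul_smul g2 g1 x).symm, (hAdmul x g2 g1 ξ).symm⟩
  have quotExact : ∀ (z : Z) (a b : {x : P // ρ x = z} × 𝔤),
      Quot.mk (rArel ρ hρ Ad z) a = Quot.mk (rArel ρ hρ Ad z) b → rArel ρ hρ Ad z a b :=
    fun z a b h => (rAequiv z).eqvGen_iff.mp (Quot.eqvGen_exact h)
  -- generic sigma-pair equality lemmas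
  have pairEq : ∀ (z z' : Z) (_ : z = z') (t : TZ z) (t' : TZ z')
      (q : Quot (rArel ρ hρ Ad z)) (q' : Quot (rArel ρ hρ Ad z')),
      HEq t t' → HEq q q' →
      (⟨z, (t, q)⟩ : Σ z : Z, TZ z × Quot (rArel ρ hρ Ad z)) = ⟨z', (t', q')⟩ := by
    rintro z _ rfl t t' q q' h1 h2
    rw [eq_of_heq h1, eq_of_heq h2]
  have quotHEq : ∀ (z z' : Z) (_ : z = z') (x : P) (h1 : ρ x = z) (h2 : ρ x = z') (ξ : 𝔤),
      HEq (Quot.mk (rArel ρ hρ Ad z) (⟨x, h1⟩, ξ)) (Quot.mk (rArel ρ hρ Ad z') (⟨x, h2⟩, ξ)) := by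
    rintro z _ rfl x h1 h2 ξ
    rfl
  -- the map α
  refine ⟨Quot.lift
      (fun a : Σ x : P, TP x =>
        (⟨ρ a.1, Tρ a.1 a.2, Quot.mk _ (⟨a.1, rfl⟩, A a.1 a.2)⟩ :
          Σ z : Z, TZ z × Quot (rArel ρ hρ Ad z))) ?_,
    fun x v => rfl, ?_, ?_⟩
  · -- well-definedness
    rintro ⟨x, v⟩ b ⟨g, rfl⟩
    obtain ⟨e, hT⟩ := Sigma.mk.inj_iff.mp (hTρequi g x v)
    -- e : ρ (g • x) = ρ x, hT : HEq (Tρ (g•x) (dΦ g x v)) (Tρ x v)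
    have hq1 : Quot.mk (rArel ρ hρ Ad (ρ (g • x))) (⟨x, e.symm⟩, A x v)
        = Quot.mk (rArel ρ hρ Ad (ρ (g • x))) (⟨g • x, rfl⟩, A (g • x) (dΦ g x v)) := by
      rw [hAequi g x v]
      exact Quot.sound ⟨g, rfl⟩
    exact pairEq (ρ x) (ρ (g • x)) e.symm (Tρ x v) (Tρ (g • x) (dΦ g x v)) _ _ hT.symm
      ((quotHEq (ρ x) (ρ (g • x)) e.symm x rfl e.symm (A x v)).trans (heq_of_eq hq1))
  · -- injectivity
    intro qa qb h
    obtain ⟨⟨x, v⟩, rfl⟩ := Quot.exists_rep qa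
    obtain ⟨⟨y, w⟩, rfl⟩ := Quot.exists_rep qb
    have hz : ρ x = ρ y := congrArg Sigma.fst h
    obtain ⟨g, hg⟩ := (hρ x y).1 hz
    subst hg
    have step : Quot.mk (fun a b : Σ x : P, TP x => ∃ g : G, b = ⟨g • a.1, dΦ g a.1 a.2⟩)
        ⟨x, v⟩ = Quot.mk _ ⟨g • x, dΦ g x v⟩ :=
      Quot.sound ⟨g, rfl⟩
    rw [step] at h ⊢
    have hsnd : (Tρ (g • x) (dΦ g x v),
          Quot.mk (rArel ρ hρ Ad (ρ (g • x))) (⟨g • x, rfl⟩, A (g • x) (dΦ g x v)))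
        = (Tρ (g • x) w,
          Quot.mk (rArel ρ hρ Ad (ρ (g • x))) (⟨g • x, rfl⟩, A (g • x) w)) :=
      eq_of_heq (Sigma.mk.inj_iff.mp h).2
    have hT : Tρ (g • x) (dΦ g x v) = Tρ (g • x) w := congrArg Prod.fst hsnd
    have hQ := congrArg Prod.snd hsnd
    obtain ⟨g', hg'⟩ := quotExact (ρ (g • x)) _ _ hQ
    have hgy : g • x = g' • (g • x) := congrArg (fun p => p.1.1) hg'
    have hg1 : g' = 1 := hfree g' (g • x) hgy.symm
    have hAvw : A (g • x) w = A (g • x) (dΦ g x v) := by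
      have h2 := congrArg Prod.snd hg'
      rw [hg1, hAd1 (g • x)] at h2
      exact h2
    have hker' : Tρ (g • x) (dΦ g x v - w) = 0 := by rw [map_sub, hT, sub_self]
    have hmem : dΦ g x v - w ∈ LinearMap.range (gen (g • x)) := by
      rw [← hker (g • x)]; exact LinearMap.mem_ker.mpr hker'
    obtain ⟨ξ, hξ⟩ := hmem
    have hξ0 : ξ = 0 := by
      have h3 : A (g • x) (gen (g • x) ξ) = A (g • x) (dΦ g x v - w) := by rw [hξ]
      rw [hA (g • x) ξ, map_sub, hAvw, sub_self] at h3
      exact h3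
    have hvw : dΦ g x v = w := by
      have h4 : dΦ g x v - w = 0 := by rw [← hξ, hξ0, map_zero]
      exact sub_eq_zero.mp h4
    exact congrArg (fun u => Quot.mk
      (fun a b : Σ x : P, TP x => ∃ g : G, b = ⟨g • a.1, dΦ g a.1 a.2⟩) ⟨g • x, u⟩) hvw
  · -- surjectivity
    rintro ⟨z, t, q⟩
    obtain ⟨⟨⟨x, hx⟩, ξ⟩, rfl⟩ := Quot.exists_rep q
    subst hx
    obtain ⟨v, hv⟩ := hTρsurj x t
    have hTgen : ∀ η : 𝔤, Tρ x (gen x η) = 0 := by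
      intro η
      have : gen x η ∈ LinearMap.ker (Tρ x) := by
        rw [hker x]; exact ⟨η, rfl⟩
      exact LinearMap.mem_ker.mp this
    refine ⟨Quot.mk _ ⟨x, v + gen x (ξ - A x v)⟩, ?_⟩
    have hT : Tρ x (v + gen x (ξ - A x v)) = t := by
      rw [map_add, hTgen, add_zero, hv]
    have hA' : A x (v + gen x (ξ - A x v)) = ξ := by
      rw [map_add, hA x, add_sub_cancel]
    show (⟨ρ x, Tρ x (v + gen x (ξ - A x v)),
        Quot.mk _ (⟨x, rfl⟩, A x (v + gen x (ξ - A x v)))⟩ :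
        Σ z : Z, TZ z × Quot (rArel ρ hρ Ad z)) = _
    rw [hT, hA']
end

section
/- Let G act freely and properly on P. The quotient T*P/G of the cotangent bundle by the cotangent-lifted action is, via a principal connection A, isomorphic as a bundle over P/G to T*(P/G) ⊕ ad* P, where ad* P = P ×_G 𝔤* is the coadjoint bundle. -/
/-- Cast between fibers of a family of modules along an equality of base points. -/
def castFam {Z : Type*} (TZ : Z → Type*) [∀ z, AddCommGroup (TZ z)]
    [∀ z, Module ℝ (TZ z)] {z z' : Z} (h : z = z') : TZ z ≃ₗ[ℝ] TZ z' :=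
  h ▸ LinearEquiv.refl ℝ (TZ z)





/-- Weinstein space: for a free (and proper) action of `G` on `P`, the
quotient `T*P/G` of the cotangent bundle by the cotangent-lifted action is, via a
principal connection `A` (with horizontal lift `hor`), isomorphic as a bundle over
`P/G = Z` to `T*(P/G) ⊕ ad* P`, where `ad* P = P ×_G 𝔤*` is the coadjoint bundle.
Cotangent fibers are modelled as duals of the tangent fibers `TP x`, the cotangent lift
of `g` sending `p ↦ p ∘ (dΦ g x)⁻¹`, and the isomorphism is
`[x, p] ↦ (p ∘ hor_x, [x, p ∘ gen_x])`, dual to the Atiyah isomorphism. -/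
theorem stmt12
    (P Z : Type*) (G : Type*) [Group G] [MulAction G P]
    (𝔤 : Type*) [AddCommGroup 𝔤] [Module ℝ 𝔤]
    (TP : P → Type*) [∀ x, AddCommGroup (TP x)] [∀ x, Module ℝ (TP x)]
    (TZ : Z → Type*) [∀ z, AddCommGroup (TZ z)] [∀ z, Module ℝ (TZ z)]
    (hfree : ∀ (g : G) (x : P), g • x = x → g = 1)
    (ρ : P → Z) (hρsurj : Function.Surjective ρ)
    (hρ : ∀ x y : P, ρ x = ρ y ↔ ∃ g : G, g • x = y)
    (dΦ : ∀ (g : G) (x : P), TP x ≃ₗ[ℝ] TP (g • x))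
    (hdΦ : ∀ (g h : G) (x : P) (v : TP x),
      (⟨(g * h) • x, dΦ (g * h) x v⟩ : Σ x : P, TP x)
        = ⟨g • (h • x), dΦ g (h • x) (dΦ h x v)⟩)
    (Ad : G → 𝔤 ≃ₗ[ℝ] 𝔤)
    (gen : ∀ x : P, 𝔤 →ₗ[ℝ] TP x)
    (hgen : ∀ (g : G) (x : P) (ξ : 𝔤), gen (g • x) (Ad g ξ) = dΦ g x (gen x ξ))
    (Tρ : ∀ x : P, TP x →ₗ[ℝ] TZ (ρ x))
    (hTρsurj : ∀ x, Function.Surjective (Tρ x))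
    (hker : ∀ x, LinearMap.ker (Tρ x) = LinearMap.range (gen x))
    (hTρequi : ∀ (g : G) (x : P) (v : TP x),
      (⟨ρ (g • x), Tρ (g • x) (dΦ g x v)⟩ : Σ z : Z, TZ z) = ⟨ρ x, Tρ x v⟩)
    (A : ∀ x : P, TP x →ₗ[ℝ] 𝔤)
    (hA : ∀ (x : P) (ξ : 𝔤), A x (gen x ξ) = ξ)
    (hAequi : ∀ (g : G) (x : P) (v : TP x), A (g • x) (dΦ g x v) = Ad g (A x v))
    (hor : ∀ x : P, TZ (ρ x) →ₗ[ℝ] TP x)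
    (hhor1 : ∀ (x : P) (t : TZ (ρ x)), Tρ x (hor x t) = t)
    (hhor2 : ∀ (x : P) (t : TZ (ρ x)), A x (hor x t) = 0)
    (hhorequi : ∀ (g : G) (x : P) (v : TP x),
      dΦ g x (hor x (Tρ x v)) = hor (g • x) (Tρ (g • x) (dΦ g x v))) :
    ∃ α : Quot (fun a b : Σ x : P, (TP x →ₗ[ℝ] ℝ) =>
            ∃ g : G, b = ⟨g • a.1, a.2.comp (dΦ g a.1).symm.toLinearMap⟩)
        → Σ z : Z, (TZ z →ₗ[ℝ] ℝ) × Quot (fun a b : {x : P // ρ x = z} × (𝔤 →ₗ[ℝ] ℝ) =>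
            ∃ g : G, b = (⟨g • a.1.1,
              ((hρ (g • a.1.1) a.1.1).2 ⟨g⁻¹, inv_smul_smul g a.1.1⟩).trans a.1.2⟩,
              a.2.comp (Ad g).symm.toLinearMap)),
      (∀ (x : P) (p : TP x →ₗ[ℝ] ℝ),
        α (Quot.mk _ ⟨x, p⟩)
          = ⟨ρ x, p.comp (hor x), Quot.mk _ (⟨x, rfl⟩, p.comp (gen x))⟩)
      ∧ Function.Bijective α := by
  classical
  -- tangent vectors generated by the group action are vertical
  have hTρgen : ∀ (x : P) (ξ : 𝔤), Tρ x (gen x ξ) = 0 := by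
    intro x ξ
    have hmem : gen x ξ ∈ LinearMap.ker (Tρ x) := by
      rw [hker]; exact ⟨ξ, rfl⟩
    exact hmem
  -- the horizontal-vertical decomposition of tangent vectors
  have decomp : ∀ (x : P) (v : TP x), hor x (Tρ x v) + gen x (A x v) = v := by
    intro x v
    have hw : v - (hor x (Tρ x v) + gen x (A x v)) ∈ LinearMap.ker (Tρ x) := by
      simp [LinearMap.mem_ker, map_sub, map_add, hhor1, hTρgen]
    rw [hker] at hw
    obtain ⟨ξ, hξ⟩ := hw
    have hξ0 : ξ = 0 := by
      have h2 := congrArg (A x) hξ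
      simpa [hA, map_sub, map_add, hhor2] using h2
    rw [hξ0, map_zero] at hξ
    exact (sub_eq_zero.mp hξ.symm).symm
  -- cast compatibility with sigma equalities
  have hcast2 : ∀ {i j z : Z} (hi : i = z) (hj : j = z) (u : TZ i) (w : TZ j),
      (⟨i, u⟩ : Σ z : Z, TZ z) = ⟨j, w⟩ → castFam TZ hi u = castFam TZ hj w := by
    intro i j z hi hj u w hs
    subst hi; subst hj
    have huw : u = w := by simpa using hs
    subst huw; rfl
  -- equality of points of the Weinstein bundle over equal base points
  have sigma_ext : ∀ {z z' : Z} (h : z' = z) (t' : TZ z' →ₗ[ℝ] ℝ) (t : TZ z →ₗ[ℝ] ℝ),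
      (∀ s : TZ z', t' s = t (castFam TZ h s)) →
      ∀ (x : P) (hx : ρ x = z') (hx2 : ρ x = z) (μ : 𝔤 →ₗ[ℝ] ℝ),
      (⟨z', (t', Quot.mk _ (⟨x, hx⟩, μ))⟩ :
          Σ z : Z, (TZ z →ₗ[ℝ] ℝ) × Quot (fun a b : {x : P // ρ x = z} × (𝔤 →ₗ[ℝ] ℝ) =>
            ∃ g : G, b = (⟨g • a.1.1,
              ((hρ (g • a.1.1) a.1.1).2 ⟨g⁻¹, inv_smul_smul g a.1.1⟩).trans a.1.2⟩,
              a.2.comp (Ad g).symm.toLinearMap)))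
        = ⟨z, (t, Quot.mk _ (⟨x, hx2⟩, μ))⟩ := by
    intro z z' h t' t hts x hx hx2 μ
    subst h
    have ht : t' = t := LinearMap.ext fun s => hts s
    subst ht
    rfl
  -- key equivariance of horizontal lifts, cast form
  have horcast : ∀ (g : G) (x : P) (s : TZ (ρ (g • x))),
      (dΦ g x).symm (hor (g • x) s)
        = hor x (castFam TZ ((hρ (g • x) x).2 ⟨g⁻¹, inv_smul_smul g x⟩) s) := by
    intro g x s
    have hz : ρ (g • x) = ρ x := (hρ (g • x) x).2 ⟨g⁻¹, inv_smul_smul g x⟩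
    set v := hor x (castFam TZ hz s) with hv
    have h1 : Tρ x v = castFam TZ hz s := hhor1 x _
    have h2 : castFam TZ hz (Tρ (g • x) (dΦ g x v)) = castFam TZ (rfl : ρ x = ρ x) (Tρ x v) :=
      hcast2 hz rfl _ _ (hTρequi g x v)
    have h3 : Tρ (g • x) (dΦ g x v) = s := by
      apply (castFam TZ hz).injective
      rw [h2]
      show Tρ x v = castFam TZ hz s
      exact h1
    have h4 := hhorequi g x v
    rw [h1, ← hv, h3] at h4
    -- h4 : dΦ g x v = hor (g • x) s
    rw [← h4, LinearEquiv.symm_apply_apply]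
  -- the forward map is well-defined
  refine ⟨Quot.lift
      (fun a => ⟨ρ a.1, (a.2.comp (hor a.1), Quot.mk _ (⟨a.1, rfl⟩, a.2.comp (gen a.1)))⟩)
      ?_, fun x p => rfl, ?_⟩
  · rintro ⟨x, p⟩ b ⟨g, rfl⟩
    have hz : ρ (g • x) = ρ x := (hρ (g • x) x).2 ⟨g⁻¹, inv_smul_smul g x⟩
    -- rewrite the inner class on the right
    have hmaps : ((p.comp (dΦ g x).symm.toLinearMap).comp (gen (g • x)))
        = (p.comp (gen x)).comp (Ad g).symm.toLinearMap := by
      ext ξ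
      simp only [LinearMap.comp_apply, LinearEquiv.coe_coe]
      congr 1
      have h5 := hgen g x ((Ad g).symm ξ)
      rw [LinearEquiv.apply_symm_apply] at h5
      rw [h5, LinearEquiv.symm_apply_apply]
    have hQ : (Quot.mk _ ((⟨x, hz.symm⟩ : {y : P // ρ y = ρ (g • x)}), p.comp (gen x))
        : Quot (fun a b : {y : P // ρ y = ρ (g • x)} × (𝔤 →ₗ[ℝ] ℝ) =>
            ∃ g' : G, b = (⟨g' • a.1.1,
              ((hρ (g' • a.1.1) a.1.1).2 ⟨g'⁻¹, inv_smul_smul g' a.1.1⟩).trans a.1.2⟩,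
              a.2.comp (Ad g').symm.toLinearMap)))
        = Quot.mk _ (⟨g • x, rfl⟩, (p.comp (dΦ g x).symm.toLinearMap).comp (gen (g • x))) := by
      apply Quot.sound
      exact ⟨g, by rw [hmaps]⟩
    dsimp only
    rw [← hQ]
    exact (sigma_ext hz ((p.comp (dΦ g x).symm.toLinearMap).comp (hor (g • x)))
      (p.comp (hor x))
      (fun s => by
        simp only [LinearMap.comp_apply, LinearEquiv.coe_coe]
        rw [horcast g x s])
      x hz.symm rfl (p.comp (gen x))).symm
  · -- bijectivity: construct the inverse
    set R : (Σ x : P, (TP x →ₗ[ℝ] ℝ)) → (Σ x : P, (TP x →ₗ[ℝ] ℝ)) → Prop :=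
      fun a b => ∃ g : G, b = ⟨g • a.1, a.2.comp (dΦ g a.1).symm.toLinearMap⟩ with hRdef
    have βwd : ∀ (z : Z) (t : TZ z →ₗ[ℝ] ℝ)
        (a b : {x : P // ρ x = z} × (𝔤 →ₗ[ℝ] ℝ)),
        (∃ g : G, b = (⟨g • a.1.1,
              ((hρ (g • a.1.1) a.1.1).2 ⟨g⁻¹, inv_smul_smul g a.1.1⟩).trans a.1.2⟩,
              a.2.comp (Ad g).symm.toLinearMap)) →
        (Quot.mk R ⟨a.1.1,
            t.comp ((castFam TZ a.1.2).toLinearMap.comp (Tρ a.1.1)) + a.2.comp (A a.1.1)⟩)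
          = Quot.mk R ⟨b.1.1,
            t.comp ((castFam TZ b.1.2).toLinearMap.comp (Tρ b.1.1)) + b.2.comp (A b.1.1)⟩ := by
      rintro z t ⟨⟨x, hx⟩, μ⟩ b ⟨g, rfl⟩
      apply Quot.sound
      refine ⟨g, ?_⟩
      congr 1
      ext v
      have hw : v = dΦ g x ((dΦ g x).symm v) := (LinearEquiv.apply_symm_apply _ _).symm
      set w := (dΦ g x).symm v with hwdef
      simp only [LinearMap.add_apply, LinearMap.comp_apply, LinearEquiv.coe_coe]
      have hz' : ρ (g • x) = z :=
        ((hρ (g • x) x).2 ⟨g⁻¹, inv_smul_smul g x⟩).trans hx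
      have hA' : A (g • x) v = Ad g (A x w) := by rw [hw]; exact hAequi g x w
      have hT : castFam TZ hz' (Tρ (g • x) v) = castFam TZ hx (Tρ x w) := by
        rw [hw]; exact hcast2 hz' hx _ _ (hTρequi g x w)
      rw [hA', LinearEquiv.symm_apply_apply, hT]
    refine Function.bijective_iff_has_inverse.mpr
      ⟨fun s => Quot.lift
          (fun a => Quot.mk R ⟨a.1.1,
            s.2.1.comp ((castFam TZ a.1.2).toLinearMap.comp (Tρ a.1.1)) + a.2.comp (A a.1.1)⟩)
          (βwd s.1 s.2.1) s.2.2, ?_, ?_⟩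
    · -- left inverse: β ∘ α = id
      intro q
      induction q using Quot.ind with | _ a => ?_
      obtain ⟨x, p⟩ := a
      show Quot.mk R _ = Quot.mk R ⟨x, p⟩
      congr 1
      congr 1
      ext v
      simp only [LinearMap.add_apply, LinearMap.comp_apply, LinearEquiv.coe_coe]
      show p (hor x (castFam TZ rfl (Tρ x v))) + p (gen x (A x v)) = p v
      have : castFam TZ (rfl : ρ x = ρ x) (Tρ x v) = Tρ x v := rfl
      rw [this, ← map_add, decomp x v]
    · -- right inverse: α ∘ β = id
      rintro ⟨z, t, c⟩
      induction c using Quot.ind with | _ a => ?_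
      obtain ⟨⟨x, hx⟩, μ⟩ := a
      subst hx
      show (⟨ρ x, ((t.comp ((castFam TZ (rfl : ρ x = ρ x)).toLinearMap.comp (Tρ x))
              + μ.comp (A x)).comp (hor x),
          Quot.mk _ ((⟨x, rfl⟩ : {y : P // ρ y = ρ x}),
            (t.comp ((castFam TZ (rfl : ρ x = ρ x)).toLinearMap.comp (Tρ x))
              + μ.comp (A x)).comp (gen x)))⟩ :
          Σ z : Z, (TZ z →ₗ[ℝ] ℝ) × Quot (fun a b : {y : P // ρ y = z} × (𝔤 →ₗ[ℝ] ℝ) =>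
            ∃ g : G, b = (⟨g • a.1.1,
              ((hρ (g • a.1.1) a.1.1).2 ⟨g⁻¹, inv_smul_smul g a.1.1⟩).trans a.1.2⟩,
              a.2.comp (Ad g).symm.toLinearMap)))
        = ⟨ρ x, (t, Quot.mk _ (⟨x, rfl⟩, μ))⟩
      have h1 : (t.comp ((castFam TZ (rfl : ρ x = ρ x)).toLinearMap.comp (Tρ x))
          + μ.comp (A x)).comp (hor x) = t := by
        ext s
        simp only [LinearMap.add_apply, LinearMap.comp_apply, LinearEquiv.coe_coe]
        show t (castFam TZ rfl (Tρ x (hor x s))) + μ (A x (hor x s)) = t s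
        rw [hhor1, hhor2, map_zero, add_zero]
        rfl
      have h2 : (t.comp ((castFam TZ (rfl : ρ x = ρ x)).toLinearMap.comp (Tρ x))
          + μ.comp (A x)).comp (gen x) = μ := by
        ext ξ
        simp only [LinearMap.add_apply, LinearMap.comp_apply, LinearEquiv.coe_coe]
        show t (castFam TZ rfl (Tρ x (gen x ξ))) + μ (A x (gen x ξ)) = μ ξ
        rw [hTρgen, hA]
        show t (castFam TZ rfl 0) + μ ξ = μ ξ
        rw [map_zero, map_zero, zero_add]
      rw [h1, h2]
end
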